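/- arXiv:1605.02222 — 2 statements merged into one kernel-verified Lean document; each statement's English description precedes it below -/
import Mathlib

section
/- For every n ≥ 2, the coefficient sequence of the total domination polynomial of the friendship graph F_n is unimodal. -/
/-- `D` is a total dominating set of `G`: every vertex has a neighbor in `D`. -/
def IsTotalDomSet {V : Type*} (G : SimpleGraph V) (D : Finset V) : Prop :=
  ∀ v : V, ∃ u ∈ D, G.Adj v u

/-- `dt G i` is the number of total dominating sets of `G` of cardinality `i`. -/
noncomputable def dt {V : Type*} [Fintype V] (G : SimpleGraph V) (i : ℕ) : ℕ :=
  Nat.card {D : Finset V // D.card = i ∧ IsTotalDomSet G D}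

/-- The total domination polynomial of `G`, as a real function. -/
noncomputable def Dt {V : Type*} [Fintype V] (G : SimpleGraph V) (x : ℝ) : ℝ :=
  ∑ i ∈ Finset.range (Fintype.card V + 1), (dt G i : ℝ) * x ^ i

/-- The total domination number of `G`. -/
noncomputable def gammaT {V : Type*} (G : SimpleGraph V) : ℕ :=
  sInf {k : ℕ | ∃ D : Finset V, D.card = k ∧ IsTotalDomSet G D}

/-- The friendship graph `F n`: `n` triangles glued at the common vertex `0`.
For `1 ≤ i ≤ 2n`, vertices `2k+1` and `2k+2` form a triangle with `0`. -/
def friendshipGraph (n : ℕ) : SimpleGraph (Fin (2 * n + 1)) :=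
  SimpleGraph.fromRel (fun a b => a = 0 ∨ b = 0 ∨ (a.val + 1) / 2 = (b.val + 1) / 2)

lemma fg_adj {n : ℕ} (a b : Fin (2*n+1)) :
    (friendshipGraph n).Adj a b ↔ a ≠ b ∧ (a = 0 ∨ b = 0 ∨ (a.val + 1) / 2 = (b.val + 1) / 2) := by
  rw [friendshipGraph, SimpleGraph.fromRel_adj]
  constructor
  · rintro ⟨h1, h2 | h2⟩
    · exact ⟨h1, h2⟩
    · rcases h2 with h | h | h
      exacts [⟨h1, Or.inr (Or.inl h)⟩, ⟨h1, Or.inl h⟩, ⟨h1, Or.inr (Or.inr h.symm)⟩]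
  · rintro ⟨h1, h2⟩
    exact ⟨h1, Or.inl h2⟩

lemma fg_adj_zero {n : ℕ} (b : Fin (2*n+1)) (hb : b ≠ 0) : (friendshipGraph n).Adj 0 b := by
  rw [fg_adj]
  exact ⟨fun h => hb h.symm, Or.inl rfl⟩

/-- the partner of a nonzero vertex -/
lemma partner_exists {n : ℕ} (hn : 1 ≤ n) (u : Fin (2*n+1)) (hu : u ≠ 0) :
    ∃ q : Fin (2*n+1), q ≠ 0 ∧ q ≠ u ∧ (u.val + 1) / 2 = (q.val + 1) / 2 := by
  have huv : u.val ≠ 0 := by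
    intro h; exact hu (Fin.ext (by simp [h]))
  have hub : u.val < 2*n+1 := u.isLt
  refine ⟨⟨if u.val % 2 = 1 then u.val + 1 else u.val - 1, by split_ifs <;> omega⟩, ?_, ?_, ?_⟩
  · intro h
    have := congrArg Fin.val h
    simp at this
    split_ifs at this <;> omega
  · intro h
    have := congrArg Fin.val h
    simp at this
    split_ifs at this <;> omega
  · simp only []
    split_ifs <;> omega

lemma tds_iff {n : ℕ} (hn : 2 ≤ n) (D : Finset (Fin (2*n+1))) :
    IsTotalDomSet (friendshipGraph n) D ↔
      ((0 ∈ D ∧ ∃ v ∈ D, v ≠ 0) ∨ D = Finset.univ.erase 0) := by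
  constructor
  · intro h
    obtain ⟨v, hvD, hv⟩ := h 0
    have hv0 : v ≠ 0 := fun h' => ((fg_adj _ _).1 hv).1 h'.symm
    by_cases h0 : 0 ∈ D
    · exact Or.inl ⟨h0, v, hvD, hv0⟩
    · right
      apply Finset.eq_of_subset_of_card_le
      · intro x hx
        refine Finset.mem_erase.2 ⟨fun hx0 => h0 (hx0 ▸ hx), Finset.mem_univ x⟩
      · -- show (univ.erase 0).card ≤ D.card by showing univ.erase 0 ⊆ D
        apply Finset.card_le_card
        intro u hu
        have hu0 : u ≠ 0 := (Finset.mem_erase.1 hu).1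
        obtain ⟨q, hq0, hqu, hq⟩ := partner_exists (by omega) u hu0
        obtain ⟨w, hwD, hw⟩ := h q
        rw [fg_adj] at hw
        have hw0 : w ≠ 0 := fun h' => h0 (h' ▸ hwD)
        rcases hw.2 with h' | h' | h'
        · exact absurd h' hq0
        · exact absurd h' hw0
        · -- q ≠ w, (q+1)/2 = (w+1)/2, and (u+1)/2 = (q+1)/2, u ≠ q, all nonzero ⇒ w = u
          have huval : u.val ≠ 0 := fun hh => hu0 (Fin.ext (by simp [hh]))
          have hwval : w.val ≠ 0 := fun hh => hw0 (Fin.ext (by simp [hh]))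
          have hqval : q.val ≠ 0 := fun hh => hq0 (Fin.ext (by simp [hh]))
          have hne : q.val ≠ w.val := fun hh => hw.1 (Fin.ext hh)
          have hne2 : u.val ≠ q.val := fun hh => hqu (Fin.ext hh.symm)
          have : w.val = u.val := by omega
          exact (Fin.ext this : w = u) ▸ hwD
  · rintro (⟨h0, v, hvD, hv⟩ | rfl)
    · intro u
      by_cases hu : u = 0
      · exact ⟨v, hvD, hu ▸ fg_adj_zero v hv⟩
      · refine ⟨0, h0, ?_⟩
        rw [fg_adj]
        exact ⟨hu, Or.inr (Or.inl rfl)⟩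
    · intro u
      by_cases hu : u = 0
      · refine ⟨⟨1, by omega⟩, ?_, ?_⟩
        · exact Finset.mem_erase.2 ⟨fun h => by simpa using congrArg Fin.val h, Finset.mem_univ _⟩
        · subst hu
          exact fg_adj_zero _ (fun h => by simpa using congrArg Fin.val h)
      · obtain ⟨q, hq0, hqu, hq⟩ := partner_exists (by omega) u hu
        refine ⟨q, Finset.mem_erase.2 ⟨hq0, Finset.mem_univ _⟩, ?_⟩
        rw [fg_adj]
        exact ⟨fun h => hqu h.symm, Or.inr (Or.inr hq)⟩

lemma card_erase_zero (n : ℕ) :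
    ((Finset.univ : Finset (Fin (2*n+1))).erase 0).card = 2*n := by
  rw [Finset.card_erase_of_mem (Finset.mem_univ _), Finset.card_univ, Fintype.card_fin]
  omega

lemma dt_small {n : ℕ} (hn : 2 ≤ n) (i : ℕ) (hi : i ≤ 1) : dt (friendshipGraph n) i = 0 := by
  rw [dt, Nat.card_eq_zero]
  refine Or.inl ⟨fun x => ?_⟩
  obtain ⟨D, hD, hT⟩ := x
  rw [tds_iff hn] at hT
  rcases hT with ⟨h0, v, hvD, hv⟩ | rfl
  · have : 2 ≤ D.card := Finset.one_lt_card.2 ⟨0, h0, v, hvD, fun h => hv h.symm⟩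
    omega
  · rw [card_erase_zero] at hD
    omega

lemma dt_eq {n : ℕ} (hn : 2 ≤ n) (i : ℕ) (hi : 2 ≤ i) :
    dt (friendshipGraph n) i = (2*n).choose (i-1) + if i = 2*n then 1 else 0 := by
  classical
  set E : Finset (Fin (2*n+1)) := (Finset.univ : Finset (Fin (2*n+1))).erase 0 with hE
  set T : Finset (Finset (Fin (2*n+1))) :=
    (Finset.powersetCard (i-1) E).image (insert 0) with hT
  have hdt : dt (friendshipGraph n) i
      = (Finset.univ.filter (fun D : Finset (Fin (2*n+1)) =>
          D.card = i ∧ IsTotalDomSet (friendshipGraph n) D)).card := by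
    rw [dt, Nat.card_eq_fintype_card, Fintype.card_subtype]
  have hfil : (Finset.univ.filter (fun D : Finset (Fin (2*n+1)) =>
          D.card = i ∧ IsTotalDomSet (friendshipGraph n) D))
      = if i = 2*n then insert E T else T := by
    ext D
    simp only [Finset.mem_filter, Finset.mem_univ, true_and, tds_iff hn]
    have hmemT : D ∈ T ↔ D.card = i ∧ 0 ∈ D := by
      constructor
      · intro hD
        rw [hT, Finset.mem_image] at hD
        obtain ⟨S, hS, rfl⟩ := hD
        rw [Finset.mem_powersetCard] at hS
        have h0S : 0 ∉ S := fun h => (Finset.mem_erase.1 (hS.1 h)).1 rfl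
        rw [Finset.card_insert_of_notMem h0S, hS.2]
        exact ⟨by omega, Finset.mem_insert_self _ _⟩
      · rintro ⟨hcard, h0⟩
        rw [hT, Finset.mem_image]
        refine ⟨D.erase 0, ?_, Finset.insert_erase h0⟩
        rw [Finset.mem_powersetCard]
        constructor
        · intro x hx
          exact Finset.mem_erase.2 ⟨(Finset.mem_erase.1 hx).1, Finset.mem_univ _⟩
        · rw [Finset.card_erase_of_mem h0, hcard]
    constructor
    · rintro ⟨hcard, ⟨h0, -⟩ | rfl⟩
      · have : D ∈ T := hmemT.2 ⟨hcard, h0⟩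
        split_ifs with h
        · exact Finset.mem_insert_of_mem this
        · exact this
      · rw [card_erase_zero] at hcard
        rw [if_pos hcard.symm]
        exact Finset.mem_insert_self _ _
    · intro hD
      have hTcase : D ∈ T → D.card = i ∧ ((0 ∈ D ∧ ∃ v ∈ D, v ≠ 0) ∨ D = E) := by
        intro h
        obtain ⟨hcard, h0⟩ := hmemT.1 h
        refine ⟨hcard, Or.inl ⟨h0, ?_⟩⟩
        have : 1 < D.card := by omega
        exact Finset.exists_mem_ne this 0
      split_ifs at hD with h
      · rcases Finset.mem_insert.1 hD with rfl | hD'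
        · exact ⟨by rw [card_erase_zero]; omega, Or.inr rfl⟩
        · exact hTcase hD'
      · exact hTcase hD
  have hcardT : T.card = (2*n).choose (i-1) := by
    rw [hT, Finset.card_image_of_injOn, Finset.card_powersetCard, card_erase_zero]
    intro S1 h1 S2 h2 h12
    simp only [Finset.mem_coe, Finset.mem_powersetCard] at h1 h2
    have h01 : 0 ∉ S1 := fun h => (Finset.mem_erase.1 (h1.1 h)).1 rfl
    have h02 : 0 ∉ S2 := fun h => (Finset.mem_erase.1 (h2.1 h)).1 rfl
    rw [← Finset.erase_insert h01, ← Finset.erase_insert h02, h12]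
  rw [hdt, hfil]
  split_ifs with h
  · have hEnotT : E ∉ T := by
      intro hET
      rw [hT, Finset.mem_image] at hET
      obtain ⟨S, _, hS⟩ := hET
      have : (0 : Fin (2*n+1)) ∈ E := hS ▸ Finset.mem_insert_self 0 S
      exact (Finset.mem_erase.1 this).1 rfl
    rw [Finset.card_insert_of_notMem hEnotT, hcardT]
  · rw [hcardT]
    omega

lemma choose_mono_half {N a b : ℕ} (hab : a ≤ b) (hb : b ≤ N) :
    (2*N).choose a ≤ (2*N).choose b := by
  induction b with
  | zero => rw [Nat.le_zero.1 hab]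
  | succ m ih =>
    rcases Nat.eq_or_lt_of_le hab with rfl | h
    · exact le_refl _
    · exact le_trans (ih (by omega) (by omega))
        (Nat.choose_le_succ_of_lt_half_left (by omega : m < (2*N)/2))

lemma choose_anti_half {N a b : ℕ} (ha : N ≤ a) (hab : a ≤ b) (hb : b ≤ 2*N) :
    (2*N).choose b ≤ (2*N).choose a := by
  have h1 : (2*N).choose b = (2*N).choose (2*N - b) := (Nat.choose_symm hb).symm
  have h2 : (2*N).choose a = (2*N).choose (2*N - a) := (Nat.choose_symm (by omega)).symm
  rw [h1, h2]
  exact choose_mono_half (by omega) (by omega)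

lemma choose_two_lb {n : ℕ} (hn : 2 ≤ n) : 2*n + 1 ≤ (2*n).choose 2 := by
  rw [Nat.choose_two_right]
  obtain ⟨m, hm⟩ : ∃ m, 2*n - 1 = m := ⟨_, rfl⟩
  rw [hm, show 2*n*m = n*m*2 from by ring, Nat.mul_div_cancel _ (by norm_num)]
  have hm3 : 3 ≤ m := by omega
  calc 2*n+1 ≤ n*3 := by omega
    _ ≤ n*m := Nat.mul_le_mul_left n hm3


theorem friendship_total_domination_polynomial_unimodal (n : ℕ) (hn : 2 ≤ n) :
    ∃ k ≤ 2 * n + 1,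
      (∀ i j : ℕ, i ≤ j → j ≤ k →
        dt (friendshipGraph n) i ≤ dt (friendshipGraph n) j) ∧
      (∀ i j : ℕ, k ≤ i → i ≤ j → j ≤ 2 * n + 1 →
        dt (friendshipGraph n) j ≤ dt (friendshipGraph n) i) := by
  refine ⟨n+1, by omega, ?_, ?_⟩
  · intro i j hij hj
    by_cases hi1 : i ≤ 1
    · rw [dt_small hn i hi1]
      exact Nat.zero_le _
    · have hi2 : 2 ≤ i := by omega
      have hj2 : 2 ≤ j := by omega
      rw [dt_eq hn i hi2, dt_eq hn j hj2,
        if_neg (by omega : ¬ i = 2*n), if_neg (by omega : ¬ j = 2*n)]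
      exact Nat.add_le_add_right (choose_mono_half (by omega) (by omega)) 0
  · intro i j hi hij hj
    have hi2 : 2 ≤ i := by omega
    have hj2 : 2 ≤ j := by omega
    rw [dt_eq hn i hi2, dt_eq hn j hj2]
    by_cases hieq : i = 2*n
    · subst hieq
      rcases (by omega : j = 2*n ∨ j = 2*n+1) with rfl | rfl
      · exact le_refl _
      · rw [if_neg (by omega), if_pos rfl, show 2*n+1-1 = 2*n from by omega,
          Nat.choose_self]
        omega
    · rw [if_neg hieq]
      by_cases hjeq : j = 2*n+1
      · subst hjeq
        rw [if_neg (by omega), show 2*n+1-1 = 2*n from by omega, Nat.choose_self]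
        exact Nat.choose_pos (by omega : i-1 ≤ 2*n)
      · by_cases hjeq2 : j = 2*n
        · subst hjeq2
          rw [if_pos rfl]
          have hsym : (2*n).choose (i-1) = (2*n).choose (2*n - (i-1)) :=
            (Nat.choose_symm (by omega)).symm
          have hmono : (2*n).choose 2 ≤ (2*n).choose (2*n - (i-1)) :=
            choose_mono_half (by omega) (by omega)
          have hc1 : (2*n).choose (2*n-1) = 2*n := by
            rw [Nat.choose_symm (by omega : 1 ≤ 2*n), Nat.choose_one_right]
          calc (2*n).choose (2*n-1) + 1 = 2*n+1 := by rw [hc1]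
            _ ≤ (2*n).choose 2 := choose_two_lb hn
            _ ≤ (2*n).choose (2*n - (i-1)) := hmono
            _ = (2*n).choose (i-1) := hsym.symm
            _ ≤ (2*n).choose (i-1) + 0 := Nat.le_add_right _ _
        · rw [if_neg hjeq2]
          have : (2*n).choose (j-1) ≤ (2*n).choose (i-1) :=
            choose_anti_half (by omega) (by omega) (by omega)
          omega
end

section
/- For the complete bipartite graph K_{m,n} (m, n ≥ 1), the total domination polynomial equals D_t(K_{m,n}, x) = (x+1)^{m+n} − (x+1)^m − (x+1)^n + 1. -/
open Finset

lemma sum_pow_powerset {α : Type*} (s : Finset α) (x : ℝ) :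
    ∑ t ∈ s.powerset, x ^ t.card = (x + 1) ^ s.card := by
  classical
  have h := Finset.prod_add (fun _ : α => x) (fun _ : α => 1) s
  simp only [Finset.prod_const, one_pow, mul_one] at h
  rw [← h]

lemma Dt_eq_sum {V : Type*} [Fintype V] [DecidableEq V] (G : SimpleGraph V)
    [DecidablePred fun D : Finset V => IsTotalDomSet G D] (x : ℝ) :
    Dt G x = ∑ D ∈ Finset.univ.filter (fun D => IsTotalDomSet G D), x ^ D.card := by
  classical
  have key : ∀ i, (dt G i : ℝ) * x ^ i =
      ∑ D ∈ (Finset.univ.filter (fun D => IsTotalDomSet G D)).filter (fun D => D.card = i),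
        x ^ D.card := by
    intro i
    rw [Finset.sum_congr rfl (fun D hD => by
      simp only [Finset.mem_filter] at hD; rw [hD.2])]
    rw [Finset.sum_const, nsmul_eq_mul]
    congr 1
    rw [dt, Nat.card_eq_fintype_card, Fintype.card_subtype]
    norm_cast
    congr 1
    ext D
    simp [and_comm]
  rw [Dt]
  rw [Finset.sum_congr rfl (fun i _ => key i)]
  apply Finset.sum_fiberwise_of_maps_to
  intro D _
  simp only [Finset.mem_range, Nat.lt_succ_iff]
  exact D.card_le_univ.trans_eq (Finset.card_univ)

theorem completeBipartite_total_domination_polynomial (m n : ℕ)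
    (hm : 1 ≤ m) (hn : 1 ≤ n) (x : ℝ) :
    Dt (completeBipartiteGraph (Fin m) (Fin n)) x =
      (x + 1) ^ (m + n) - (x + 1) ^ m - (x + 1) ^ n + 1 := by
  classical
  set V := Fin m ⊕ Fin n
  set G := completeBipartiteGraph (Fin m) (Fin n)
  -- characterization
  have hchar : ∀ D : Finset V, IsTotalDomSet G D ↔
      ((∃ a : Fin m, Sum.inl a ∈ D) ∧ (∃ b : Fin n, Sum.inr b ∈ D)) := by
    intro D
    constructor
    · intro h
      obtain ⟨u, hu, hadj⟩ := h (Sum.inl ⟨0, hm⟩)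
      obtain ⟨w, hw, hadj'⟩ := h (Sum.inr ⟨0, hn⟩)
      constructor
      · cases w with
        | inl a => exact ⟨a, hw⟩
        | inr b => simp [G, completeBipartiteGraph] at hadj'
      · cases u with
        | inl a => simp [G, completeBipartiteGraph] at hadj
        | inr b => exact ⟨b, hu⟩
    · rintro ⟨⟨a, ha⟩, ⟨b, hb⟩⟩ v
      cases v with
      | inl c => exact ⟨Sum.inr b, hb, by simp [G, completeBipartiteGraph]⟩
      | inr c => exact ⟨Sum.inl a, ha, by simp [G, completeBipartiteGraph]⟩
  rw [Dt_eq_sum]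
  have hP : Finset.univ.filter (fun D : Finset V => IsTotalDomSet G D)
      = Finset.univ.filter (fun D : Finset V =>
          (∃ a : Fin m, Sum.inl a ∈ D) ∧ (∃ b : Fin n, Sum.inr b ∈ D)) := by
    apply Finset.filter_congr
    intro D _
    exact hchar D
  rw [hP]
  -- left and right vertex sets
  set L : Finset V := Finset.univ.map ⟨Sum.inl, Sum.inl_injective⟩ with hL
  set R : Finset V := Finset.univ.map ⟨Sum.inr, Sum.inr_injective⟩ with hR
  have hmemL : ∀ v : V, v ∈ L ↔ ∃ a : Fin m, Sum.inl a = v := by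
    intro v; simp [hL]
  have hmemR : ∀ v : V, v ∈ R ↔ ∃ b : Fin n, Sum.inr b = v := by
    intro v; simp [hR]
  -- sums over various filters
  have htotal : ∑ D : Finset V, x ^ D.card = (x + 1) ^ (m + n) := by
    rw [← Finset.powerset_univ, sum_pow_powerset, Finset.card_univ]
    congr 1
    simp [V]
  -- D has no inl element ↔ D ⊆ R
  have hnoL : Finset.univ.filter (fun D : Finset V => ¬ ∃ a : Fin m, Sum.inl a ∈ D)
      = R.powerset := by
    ext D
    simp only [Finset.mem_filter, Finset.mem_univ, true_and, Finset.mem_powerset]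
    constructor
    · intro h v hv
      rw [hmemR]
      cases v with
      | inl a => exact absurd ⟨a, hv⟩ h
      | inr b => exact ⟨b, rfl⟩
    · rintro h ⟨a, ha⟩
      have := h ha
      rw [hmemR] at this
      obtain ⟨b, hb⟩ := this
      exact Sum.inr_ne_inl hb
  have hnoR : Finset.univ.filter (fun D : Finset V => ¬ ∃ b : Fin n, Sum.inr b ∈ D)
      = L.powerset := by
    ext D
    simp only [Finset.mem_filter, Finset.mem_univ, true_and, Finset.mem_powerset]
    constructor
    · intro h v hv
      rw [hmemL]
      cases v with
      | inl a => exact ⟨a, rfl⟩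
      | inr b => exact absurd ⟨b, hv⟩ h
    · rintro h ⟨b, hb⟩
      have := h hb
      rw [hmemL] at this
      obtain ⟨a, ha⟩ := this
      exact Sum.inl_ne_inr ha
  have hsumR : ∑ D ∈ R.powerset, x ^ D.card = (x + 1) ^ n := by
    rw [sum_pow_powerset]; congr 1; simp [hR]
  have hsumL : ∑ D ∈ L.powerset, x ^ D.card = (x + 1) ^ m := by
    rw [sum_pow_powerset]; congr 1; simp [hL]
  -- inclusion-exclusion
  have hsplit := Finset.sum_filter_add_sum_filter_not Finset.univ
    (fun D : Finset V => (∃ a : Fin m, Sum.inl a ∈ D) ∧ (∃ b : Fin n, Sum.inr b ∈ D))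
    (fun D => x ^ D.card)
  have hnot : Finset.univ.filter (fun D : Finset V =>
      ¬ ((∃ a : Fin m, Sum.inl a ∈ D) ∧ (∃ b : Fin n, Sum.inr b ∈ D)))
      = L.powerset ∪ R.powerset := by
    rw [← hnoL, ← hnoR, ← Finset.filter_or]
    apply Finset.filter_congr
    intro D _
    tauto
  have hinter : L.powerset ∩ R.powerset = {(∅ : Finset V)} := by
    ext D
    simp only [Finset.mem_inter, Finset.mem_powerset, Finset.mem_singleton]
    constructor
    · rintro ⟨h1, h2⟩
      ext v
      simp only [Finset.notMem_empty, iff_false]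
      intro hv
      have hv1 := h1 hv; have hv2 := h2 hv
      rw [hmemL] at hv1; rw [hmemR] at hv2
      obtain ⟨a, ha⟩ := hv1; obtain ⟨b, hb⟩ := hv2
      rw [← ha] at hb; exact Sum.inr_ne_inl hb
    · rintro rfl
      simp
  have hunion : ∑ D ∈ L.powerset ∪ R.powerset, x ^ D.card
      = (x + 1) ^ m + (x + 1) ^ n - 1 := by
    have h2 := Finset.sum_union_inter (s₁ := L.powerset) (s₂ := R.powerset)
      (f := fun D : Finset V => x ^ D.card)
    rw [hinter, hsumL, hsumR] at h2
    simp only [Finset.sum_singleton, Finset.card_empty, pow_zero] at h2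
    linarith
  rw [hnot, hunion, htotal] at hsplit
  linarith
end
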